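/- Let f : (0,1] → ℝ, f(x) = sin(1/x) + 2, and let F := ({0} × [1,3]) ∪ graph(f) ⊂ ℝ^2, where graph(f) = {(x, f(x)) : x ∈ (0,1]}. Then F is compact, F does not meet the x-axis, the visible part of F from the x-axis (i.e. V_{θ,0}(F) with θ = (0,1), so that L_{θ,0} is the x-axis) equals {(0,1)} ∪ graph(f), and the closure of this visible part equals F. -/

import Mathlib

open Metric Set
open scoped RealInnerProductSpace ENNReal

/-- Orthogonal projection onto the affine hyperplane through `y` orthogonal to the
unit vector `θ` (for `y = 0` this is the projection onto the hyperplane `L_θ`). -/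
noncomputable def projH {d : ℕ} (θ y z : EuclideanSpace ℝ (Fin d)) : EuclideanSpace ℝ (Fin d) :=
  z - ⟪z - y, θ⟫ • θ

/-- The affine hyperplane `L_{θ,y}` through `y` orthogonal to `θ`. -/
def affHyp {d : ℕ} (θ y : EuclideanSpace ℝ (Fin d)) : Set (EuclideanSpace ℝ (Fin d)) :=
  {x | ⟪x - y, θ⟫ = 0}

/-- The visible part of `F` from the hyperplane `L_{θ,y}`:
points `z ∈ F` such that the segment from `z` to its projection meets `F` only in `z`. -/
noncomputable def visible {d : ℕ} (θ y : EuclideanSpace ℝ (Fin d))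
    (F : Set (EuclideanSpace ℝ (Fin d))) : Set (EuclideanSpace ℝ (Fin d)) :=
  {z | z ∈ F ∧ segment ℝ z (projH θ y z) ∩ F = {z}}

/-- Interior of `A` relative to the hyperplane `L_θ` through the origin orthogonal to `θ`. -/
def relIntH {d : ℕ} (θ : EuclideanSpace ℝ (Fin d)) (A : Set (EuclideanSpace ℝ (Fin d))) :
    Set (EuclideanSpace ℝ (Fin d)) :=
  {x | x ∈ A ∧ ∃ ε > 0, ∀ z : EuclideanSpace ℝ (Fin d), ⟪z, θ⟫ = 0 → dist z x < ε → z ∈ A}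

/-- The penetrable part of `F` in direction `θ`:
`Pen_θ(F) = F ∩ P_θ⁻¹(P_θ(F) \ Int(P_θ(F)))`. -/
noncomputable def pen {d : ℕ} (θ : EuclideanSpace ℝ (Fin d))
    (F : Set (EuclideanSpace ℝ (Fin d))) : Set (EuclideanSpace ℝ (Fin d)) :=
  F ∩ projH θ 0 ⁻¹' (projH θ 0 '' F \ relIntH θ (projH θ 0 '' F))

/-- The Assouad dimension of a set: the infimum of all `s ≥ 0` such that for some `C > 0`,
for all `0 < r < R` and `x ∈ F`, the set `F ∩ B(x,R)` can be covered by at most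
`C (R/r)^s` balls of radius `r`. -/
noncomputable def dimA {d : ℕ} (F : Set (EuclideanSpace ℝ (Fin d))) : ℝ≥0∞ :=
  ⨅ (s : ℝ) (_ : 0 ≤ s) (_ : ∃ C : ℝ, 0 < C ∧ ∀ x ∈ F, ∀ r R : ℝ, 0 < r → r < R →
      ∃ t : Finset (EuclideanSpace ℝ (Fin d)),
        (t.card : ℝ) ≤ C * (R / r) ^ s ∧ F ∩ ball x R ⊆ ⋃ c ∈ t, ball c r),
    ENNReal.ofReal s

/-- Least number of balls of radius `r` needed to cover `F`. -/
noncomputable def coverN {d : ℕ} (F : Set (EuclideanSpace ℝ (Fin d))) (r : ℝ) : ℕ :=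
  sInf {n : ℕ | ∃ t : Finset (EuclideanSpace ℝ (Fin d)), t.card = n ∧ F ⊆ ⋃ c ∈ t, ball c r}

/-- The upper box-counting dimension of a set. -/
noncomputable def udimB {d : ℕ} (F : Set (EuclideanSpace ℝ (Fin d))) : ℝ≥0∞ :=
  Filter.limsup (fun r : ℝ => ENNReal.ofReal (Real.log (coverN F r) / Real.log (1 / r)))
    (nhdsWithin 0 (Set.Ioi 0))

/-- The point of the plane `ℝ² = EuclideanSpace ℝ (Fin 2)` with coordinates `(a, b)`. -/
noncomputable def e2 (a b : ℝ) : EuclideanSpace ℝ (Fin 2) :=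
  (EuclideanSpace.equiv (Fin 2) ℝ).symm ![a, b]


/-!
Every point of the graph is the only point of `F` on its vertical line, so it is visible from the
`x`-axis, while on the limit segment `{0} × [1,3]` only its lowest point `(0,1)` is. Since
`sin (1 / x)` takes every value of `[-1,1]` for arbitrarily small `x > 0`, the closure of the graph
is `F`, which is therefore compact as a closed subset of `[0,1] × [1,3]`.
-/

open Filter Topology

noncomputable def sinGraph : Set (EuclideanSpace ℝ (Fin 2)) :=
  {z | z 0 ∈ Ioc (0:ℝ) 1 ∧ z 1 = Real.sin (1 / z 0) + 2}

def sinLimitSegment : Set (EuclideanSpace ℝ (Fin 2)) :=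
  {z | z 0 = 0 ∧ z 1 ∈ Icc (1:ℝ) 3}

lemma e2_zero_one_mem_sinLimitSegment : e2 0 1 ∈ sinLimitSegment :=
  ⟨rfl, by norm_num [e2]⟩

@[simp] lemma e2_apply_zero (a b : ℝ) : e2 a b 0 = a := rfl

@[simp] lemma e2_apply_one (a b : ℝ) : e2 a b 1 = b := rfl

lemma e2_eta (z : EuclideanSpace ℝ (Fin 2)) : e2 (z 0) (z 1) = z := by
  ext i; fin_cases i <;> rfl

lemma continuous_e2 : Continuous fun p : ℝ × ℝ => e2 p.1 p.2 := by
  unfold e2; fun_prop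

lemma isCompact_rectangle (a b c d : ℝ) :
    IsCompact {z : EuclideanSpace ℝ (Fin 2) | z 0 ∈ Icc a b ∧ z 1 ∈ Icc c d} := by
  have h : {z : EuclideanSpace ℝ (Fin 2) | z 0 ∈ Icc a b ∧ z 1 ∈ Icc c d} =
      (fun p : ℝ × ℝ => e2 p.1 p.2) '' Icc a b ×ˢ Icc c d := by
    ext z
    exact ⟨fun hz => ⟨(z 0, z 1), hz, e2_eta z⟩, by rintro ⟨p, hp, rfl⟩; exact hp⟩
  rw [h]
  exact (isCompact_Icc.prod isCompact_Icc).image continuous_e2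

lemma inner_e2_zero_one (z : EuclideanSpace ℝ (Fin 2)) : ⟪z, e2 0 1⟫ = z 1 := by
  simp [PiLp.inner_apply, Fin.sum_univ_two, e2]

lemma projH_e2_zero_one (z : EuclideanSpace ℝ (Fin 2)) :
    projH (e2 0 1) 0 z = e2 (z 0) 0 := by
  rw [projH, sub_zero, inner_e2_zero_one]
  ext i; fin_cases i <;> simp [e2]

lemma segment_projH_e2_zero_one (z : EuclideanSpace ℝ (Fin 2)) :
    segment ℝ z (projH (e2 0 1) 0 z) = {w | w 0 = z 0 ∧ w 1 ∈ uIcc (z 1) 0} := by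
  rw [projH_e2_zero_one, ← segment_eq_uIcc]
  ext w
  constructor
  · rintro ⟨a, b, ha, hb, hab, rfl⟩
    refine ⟨?_, a, b, ha, hb, hab, ?_⟩ <;> simp [← add_mul, hab]
  · rintro ⟨hw0, a, b, ha, hb, hab, hw1⟩
    refine ⟨a, b, ha, hb, hab, ?_⟩
    ext i; fin_cases i <;> simp [← add_mul, hab, hw0, ← hw1]

lemma mem_visible_e2_zero_one_iff {F : Set (EuclideanSpace ℝ (Fin 2))}
    {z : EuclideanSpace ℝ (Fin 2)} :
    z ∈ visible (e2 0 1) 0 F ↔ z ∈ F ∧ ∀ w ∈ F, w 0 = z 0 → w 1 ∈ uIcc (z 1) 0 → w = z := by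
  simp only [visible, segment_projH_e2_zero_one, eq_singleton_iff_unique_mem, mem_ofPred_eq,
    mem_inter_iff, left_mem_uIcc, true_and, and_imp]
  constructor
  · rintro ⟨hz, -, h⟩
    exact ⟨hz, fun w hw h0 h1 => h w h0 h1 hw⟩
  · rintro ⟨hz, h⟩
    exact ⟨hz, hz, fun w h0 h1 hw => h w hw h0 h1⟩

lemma sinGraph_subset_rectangle :
    sinGraph ⊆ {z : EuclideanSpace ℝ (Fin 2) | z 0 ∈ Icc 0 1 ∧ z 1 ∈ Icc 1 3} := by
  rintro z ⟨hz0, hz1⟩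
  refine ⟨Ioc_subset_Icc_self hz0, ?_, ?_⟩ <;>
    linarith [Real.neg_one_le_sin (1 / z 0), Real.sin_le_one (1 / z 0)]

lemma eq_of_mem_sinGraph {z w : EuclideanSpace ℝ (Fin 2)} (hz : z ∈ sinGraph)
    (hw : w ∈ sinGraph) (h : w 0 = z 0) : w = z := by
  rw [← e2_eta w, ← e2_eta z, hw.2, hz.2, h]

lemma exists_tendsto_zero_sin_inv_eq {c : ℝ} (hc : c ∈ Icc (-1) 1) :
    ∃ x : ℕ → ℝ, Tendsto x atTop (𝓝 0) ∧ ∀ n, x n ∈ Ioc 0 1 ∧ Real.sin (1 / x n) = c := by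
  set s : ℕ → ℝ := fun n => Real.arcsin c + (n + 1 : ℕ) * (2 * Real.pi)
  have hs : ∀ n, 1 ≤ s n := fun n => by
    have : (1 : ℝ) ≤ (n + 1 : ℕ) := by exact_mod_cast n.succ_pos
    nlinarith [Real.neg_pi_div_two_le_arcsin c, Real.pi_gt_three]
  have hs_top : Tendsto s atTop atTop :=
    tendsto_atTop_add_const_left _ _ <|
      (tendsto_natCast_atTop_atTop.comp (tendsto_add_atTop_nat 1)).atTop_mul_const
        Real.two_pi_pos
  refine ⟨fun n => (s n)⁻¹, hs_top.inv_tendsto_atTop, fun n => ⟨⟨?_, ?_⟩, ?_⟩⟩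
  · exact inv_pos.2 (zero_lt_one.trans_le (hs n))
  · exact inv_le_one_of_one_le₀ (hs n)
  · rw [one_div, inv_inv, Real.sin_add_nat_mul_two_pi, Real.sin_arcsin hc.1 hc.2]

lemma sinLimitSegment_subset_closure_sinGraph : sinLimitSegment ⊆ closure sinGraph := by
  rintro z ⟨hz0, hz1⟩
  obtain ⟨x, hx, hx_mem⟩ :=
    exists_tendsto_zero_sin_inv_eq (c := z 1 - 2) ⟨by linarith [hz1.1], by linarith [hz1.2]⟩
  have hlim : Tendsto (fun n => e2 (x n) (z 1)) atTop (𝓝 z) := by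
    rw [← e2_eta z, hz0]
    exact (continuous_e2.tendsto _).comp (hx.prodMk_nhds tendsto_const_nhds)
  refine mem_closure_of_tendsto hlim (Eventually.of_forall fun n => ⟨(hx_mem n).1, ?_⟩)
  show z 1 = Real.sin (1 / x n) + 2
  linarith [(hx_mem n).2]

lemma closure_sinGraph_subset : closure sinGraph ⊆ sinLimitSegment ∪ sinGraph := by
  intro z hz
  obtain ⟨⟨hz0, hz0'⟩, hz1⟩ :=
    closure_minimal sinGraph_subset_rectangle (isCompact_rectangle 0 1 1 3).isClosed hz
  rcases hz0.eq_or_lt with h | h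
  · exact Or.inl ⟨h.symm, hz1⟩
  · -- over `0 < x` the graph is closed, being the zero set of a function continuous there
    set g : EuclideanSpace ℝ (Fin 2) → ℝ := fun w => w 1 - (Real.sin (1 / w 0) + 2)
    have hg : ContinuousAt g z := by fun_prop (disch := exact h.ne')
    have hg_image : g '' sinGraph ⊆ {0} := by
      rintro _ ⟨w, hw, rfl⟩
      simp [g, hw.2]
    have hgz : g z ∈ closure {0} := closure_mono hg_image (mem_closure_image hg hz)
    rw [closure_singleton] at hgz
    exact Or.inr ⟨⟨h, hz0'⟩, sub_eq_zero.1 hgz⟩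

lemma closure_sinGraph : closure sinGraph = sinLimitSegment ∪ sinGraph :=
  closure_sinGraph_subset.antisymm
    (union_subset sinLimitSegment_subset_closure_sinGraph subset_closure)

lemma visible_sinLimitSegment_union_sinGraph :
    visible (e2 0 1) 0 (sinLimitSegment ∪ sinGraph) = insert (e2 0 1) sinGraph := by
  have hbase := e2_zero_one_mem_sinLimitSegment
  ext z
  rw [mem_visible_e2_zero_one_iff]
  constructor
  · rintro ⟨hS | hG, hvis⟩
    · refine Or.inl (hvis _ (Or.inl hbase) hS.1.symm ?_).symm
      rw [uIcc_of_ge (by linarith [hS.2.1])]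
      exact ⟨zero_le_one, hS.2.1⟩
    · exact Or.inr hG
  · rintro (rfl | hG)
    · refine ⟨Or.inl hbase, ?_⟩
      rintro w (hS | hG) h0 h1
      · simp only [e2_apply_one, uIcc_of_ge zero_le_one] at h1
        rw [← e2_eta w, hS.1, le_antisymm h1.2 hS.2.1]
      · exact absurd h0 hG.1.1.ne'
    · refine ⟨Or.inr hG, ?_⟩
      rintro w (hS | hG') h0 -
      · exact absurd (h0 ▸ hS.1) hG.1.1.ne'
      · exact eq_of_mem_sinGraph hG hG' h0

/-- For `F = ({0} × [1,3]) ∪ graph(x ↦ sin(1/x) + 2)`, the set `F` is compact and does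
not meet the `x`-axis, the visible part of `F` from the `x`-axis equals
`{(0,1)} ∪ graph(f)`, and the closure of this visible part equals `F`. -/
theorem stmt18 (F : Set (EuclideanSpace ℝ (Fin 2)))
    (hF : F = {z | z 0 = 0 ∧ z 1 ∈ Set.Icc (1:ℝ) 3} ∪
      {z | z 0 ∈ Set.Ioc (0:ℝ) 1 ∧ z 1 = Real.sin (1 / z 0) + 2})
    (θ : EuclideanSpace ℝ (Fin 2)) (hθ : θ = e2 0 1) :
    IsCompact F ∧
    affHyp θ 0 ∩ F = ∅ ∧
    visible θ 0 F =
      insert (e2 0 1) {z | z 0 ∈ Set.Ioc (0:ℝ) 1 ∧ z 1 = Real.sin (1 / z 0) + 2} ∧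
    closure (visible θ 0 F) = F := by
  subst hF hθ
  rw [← sinGraph.eq_1, ← sinLimitSegment.eq_1, visible_sinLimitSegment_union_sinGraph,
    ← closure_sinGraph]
  have hF_rect := closure_minimal sinGraph_subset_rectangle (isCompact_rectangle 0 1 1 3).isClosed
  refine ⟨(isCompact_rectangle 0 1 1 3).closure_of_subset sinGraph_subset_rectangle, ?_, rfl, ?_⟩
  · refine eq_empty_of_forall_notMem fun z ⟨hz, hzF⟩ => ?_
    have hz1 : z 1 = 0 := by simpa [affHyp, inner_e2_zero_one] using hz
    linarith [(hF_rect hzF).2.1]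
  · rw [insert_eq, closure_union, closure_singleton]
    exact union_eq_self_of_subset_left <| singleton_subset_iff.2 <|
      sinLimitSegment_subset_closure_sinGraph e2_zero_one_mem_sinLimitSegment
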